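/- arXiv:2006.08447 — 6 statements merged into one kernel-verified Lean document; each statement's English description precedes it below -/
import Mathlib

section
/- Along any solution of U' = -βUV, I' = βUV - δI, V' = pI - cV with U(t) > 0 for all t, the quantity ln U(t) - (βp/(cδ))U(t) - (βp/(cδ))I(t) - (β/c)V(t) is constant in time. -/
/-! Differentiating `ln U` gives `U'/U = -βV`. The coefficient `βp/(cδ)` of `U + I` removes the
infection term `βUV` and turns `I` into `(βp/c) I`, which the coefficient `β/c` of `V` cancels
together with `-βV`; so the derivative vanishes identically. -/

open Real

theorem targetCellLimited_invariant_hasDerivAt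
    {β δ p c : ℝ} (hδ : δ ≠ 0) (hc : c ≠ 0) {U I V : ℝ → ℝ} {t : ℝ} (hUt : U t ≠ 0)
    (hU : HasDerivAt U (-β * U t * V t) t)
    (hI : HasDerivAt I (β * U t * V t - δ * I t) t)
    (hV : HasDerivAt V (p * I t - c * V t) t) :
    HasDerivAt (fun t => log (U t) - β * p / (c * δ) * U t - β * p / (c * δ) * I t
      - β / c * V t) 0 t := by
  have h := (((hU.log hUt).sub (hU.const_mul (β * p / (c * δ)))).sub
    (hI.const_mul (β * p / (c * δ)))).sub (hV.const_mul (β / c))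
  refine h.congr_deriv ?_
  field_simp
  ring

theorem conserved_quantity_general
    (β δ p c : ℝ) (hδ : 0 < δ) (hc : 0 < c)
    (U I V : ℝ → ℝ)
    (hUpos : ∀ t, 0 < U t)
    (hU : ∀ t, HasDerivAt U (-β * U t * V t) t)
    (hI : ∀ t, HasDerivAt I (β * U t * V t - δ * I t) t)
    (hV : ∀ t, HasDerivAt V (p * I t - c * V t) t) :
    ∀ t s : ℝ,
      Real.log (U t) - (β * p / (c * δ)) * U t - (β * p / (c * δ)) * I t - (β / c) * V t =
      Real.log (U s) - (β * p / (c * δ)) * U s - (β * p / (c * δ)) * I s - (β / c) * V s := by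
  have hderiv t := targetCellLimited_invariant_hasDerivAt hδ.ne' hc.ne' (hUpos t).ne'
    (hU t) (hI t) (hV t)
  exact is_const_of_deriv_eq_zero (fun t => (hderiv t).differentiableAt) (fun t => (hderiv t).deriv)

/-- Along any solution of the target-cell-limited model with `U > 0`, the quantity
`ln U - (βp/(cδ)) U - (βp/(cδ)) I - (β/c) V` is constant in time. -/
theorem conserved_quantity
    (β δ p c : ℝ) (hβ : 0 < β) (hδ : 0 < δ) (hp : 0 < p) (hc : 0 < c)
    (U I V : ℝ → ℝ)
    (hUpos : ∀ t, 0 < U t)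
    (hU : ∀ t, HasDerivAt U (-β * U t * V t) t)
    (hI : ∀ t, HasDerivAt I (β * U t * V t - δ * I t) t)
    (hV : ∀ t, HasDerivAt V (p * I t - c * V t) t) :
    ∀ t s : ℝ,
      Real.log (U t) - (β * p / (c * δ)) * U t - (β * p / (c * δ)) * I t - (β / c) * V t =
      Real.log (U s) - (β * p / (c * δ)) * U s - (β * p / (c * δ)) * I s - (β / c) * V s :=
  conserved_quantity_general β δ p c hδ hc U I V hUpos hU hI hV
end

section
/- Let (U, I, V) solve U' = -βUV, I' = βUV - δI, V' = pI - cV with β, δ, p, c > 0 and initial conditions U(0) > 0, I(0) ≥ 0, V(0) > 0, components remaining nonnegative. If U(t) converges to a limit U_∞ as t → ∞, then I(t) → 0 and V(t) → 0 as t → ∞. -/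
/-!
Two Lyapunov functions do the work: `U + I` decreases at rate `δ I` and `p (U + I) + δ V`
decreases at rate `δ c V`. Both are nonnegative, so both converge; since `U` converges, so do
`I` and then `V`. A convergent function whose derivative has a limit has derivative tending to
`0`, which forces `δ lim I = 0` and `δ c lim V = 0`.
-/

open Filter Topology Set

theorem AntitoneOn.exists_tendsto_atTop {α β : Type*} [Preorder α] [IsDirectedOrder α]
    [ConditionallyCompleteLinearOrder β] [TopologicalSpace β] [OrderTopology β]
    {f : α → β} {a : α} (hf : AntitoneOn f (Ici a)) (hbdd : BddBelow (f '' Ici a)) :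
    ∃ L, Tendsto f atTop (𝓝 L) :=
  ⟨_, tendsto_comp_val_Ici_atTop.1 <| tendsto_atTop_ciInf (f := fun x : Ici a => f x)
    (fun x y hxy => hf x.2 y.2 hxy) (by rwa [← image_eq_range])⟩

theorem exists_tendsto_of_hasDerivAt_nonpos {f f' : ℝ → ℝ} {a b : ℝ}
    (hf : ∀ t, a ≤ t → HasDerivAt f (f' t) t) (hf' : ∀ t, a ≤ t → f' t ≤ 0)
    (hb : ∀ t, a ≤ t → b ≤ f t) : ∃ L, Tendsto f atTop (𝓝 L) := by
  have hanti : AntitoneOn f (Ici a) :=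
    antitoneOn_of_hasDerivWithinAt_nonpos (convex_Ici a)
      (fun t ht => (hf t ht).continuousAt.continuousWithinAt)
      (fun t ht => (hf t (interior_subset ht)).hasDerivWithinAt)
      (fun t ht => hf' t (interior_subset ht))
  exact hanti.exists_tendsto_atTop ⟨b, forall_mem_image.2 hb⟩

theorem eq_zero_of_tendsto_of_tendsto_deriv {f f' : ℝ → ℝ} {L M : ℝ}
    (hf : ∀ t, HasDerivAt f (f' t) t) (hfL : Tendsto f atTop (𝓝 L))
    (hf'M : Tendsto f' atTop (𝓝 M)) : M = 0 := by
  have slope : ∀ t : ℝ, ∃ s ∈ Ioo t (t + 1), f' s = f (t + 1) - f t := fun t => by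
    simpa using exists_hasDerivAt_eq_slope f f' (lt_add_one t)
      (fun x _ => (hf x).continuousAt.continuousWithinAt) (fun x _ => hf x)
  choose s hs hfs using slope
  have hs_top : Tendsto s atTop atTop := tendsto_atTop_mono (fun t => (hs t).1.le) tendsto_id
  have hdiff : Tendsto (fun t => f (t + 1) - f t) atTop (𝓝 0) := by
    simpa using (hfL.comp (tendsto_atTop_add_const_right _ 1 tendsto_id)).sub hfL
  exact tendsto_nhds_unique ((hf'M.comp hs_top).congr hfs) hdiff

theorem I_and_V_tend_to_zero_general
    (β δ p c : ℝ) (hδ : 0 < δ) (hp : 0 < p) (hc : 0 < c)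
    (U I V : ℝ → ℝ)
    (hU : ∀ t, HasDerivAt U (-β * U t * V t) t)
    (hI : ∀ t, HasDerivAt I (β * U t * V t - δ * I t) t)
    (hV : ∀ t, HasDerivAt V (p * I t - c * V t) t)
    (hnonneg : ∀ t, 0 ≤ t → 0 ≤ U t ∧ 0 ≤ I t ∧ 0 ≤ V t)
    (Uinf : ℝ) (hconv : Filter.Tendsto U Filter.atTop (nhds Uinf)) :
    Filter.Tendsto I Filter.atTop (nhds 0) ∧
      Filter.Tendsto V Filter.atTop (nhds 0) := by
  have hF : ∀ t, HasDerivAt (fun t => U t + I t) (-δ * I t) t :=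
    fun t => ((hU t).add (hI t)).congr_deriv (by ring)
  have hG : ∀ t, HasDerivAt (fun t => p * (U t + I t) + δ * V t) (-(δ * c) * V t) t :=
    fun t => (((hF t).const_mul p).add ((hV t).const_mul δ)).congr_deriv (by ring)
  obtain ⟨LF, hLF⟩ := exists_tendsto_of_hasDerivAt_nonpos (a := 0) (b := 0) (fun t _ => hF t)
    (fun t ht => by nlinarith [hnonneg t ht]) (fun t ht => by linarith [hnonneg t ht])
  obtain ⟨LG, hLG⟩ := exists_tendsto_of_hasDerivAt_nonpos (a := 0) (b := 0) (fun t _ => hG t)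
    (fun t ht => by have := hnonneg t ht; have := mul_pos hδ hc; nlinarith)
    (fun t ht => by have := hnonneg t ht; nlinarith)
  have hIlim : Tendsto I atTop (𝓝 (LF - Uinf)) :=
    (hLF.sub hconv).congr fun t => by ring
  have hVlim : Tendsto V atTop (𝓝 ((LG - p * LF) / δ)) :=
    ((hLG.sub (hLF.const_mul p)).div_const δ).congr fun t => by field_simp; ring
  have hLI := eq_zero_of_tendsto_of_tendsto_deriv hF hLF (hIlim.const_mul (-δ))
  have hLV := eq_zero_of_tendsto_of_tendsto_deriv hG hLG (hVlim.const_mul (-(δ * c)))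
  simp only [mul_eq_zero, neg_eq_zero, hδ.ne', hc.ne', or_self, false_or] at hLI hLV
  exact ⟨hLI ▸ hIlim, hLV ▸ hVlim⟩

/-- If `U(t)` converges as `t → ∞`, then `I(t) → 0` and `V(t) → 0`. -/
theorem I_and_V_tend_to_zero
    (β δ p c : ℝ) (hβ : 0 < β) (hδ : 0 < δ) (hp : 0 < p) (hc : 0 < c)
    (U I V : ℝ → ℝ)
    (hU : ∀ t, HasDerivAt U (-β * U t * V t) t)
    (hI : ∀ t, HasDerivAt I (β * U t * V t - δ * I t) t)
    (hV : ∀ t, HasDerivAt V (p * I t - c * V t) t)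
    (hU0 : 0 < U 0) (hI0 : 0 ≤ I 0) (hV0 : 0 < V 0)
    (hnonneg : ∀ t, 0 ≤ t → 0 ≤ U t ∧ 0 ≤ I t ∧ 0 ≤ V t)
    (Uinf : ℝ) (hconv : Filter.Tendsto U Filter.atTop (nhds Uinf)) :
    Filter.Tendsto I Filter.atTop (nhds 0) ∧
      Filter.Tendsto V Filter.atTop (nhds 0) :=
  I_and_V_tend_to_zero_general β δ p c hδ hp hc U I V hU hI hV hnonneg Uinf hconv
end

section
/- Let W_p denote the principal branch of the Lambert W function. If U_∞ and U₀ > 0 satisfy ln(U_∞/U₀) = (βp/(cδ))(U_∞ - U₀) + K₀ with U_∞ ∈ [0, U_c) where U_c = cδ/(βp), then U_∞ = -U_c · W_p(-R₀ e^{-R₀} e^{K₀}), where R₀ = U₀/U_c. -/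
/-!
Put `y = -U_∞ / U_c`. Exponentiating the final-size relation turns it into
`y e^y = -R₀ e^{-R₀} e^{K₀}`, and the right-hand side lies in `[-1/e, 0]` because
`t e^t ≥ -1/e` everywhere and `K₀ ≤ 0`. Since `U_∞ < U_c` gives `y ≥ -1`, and `t ↦ t e^t` is
strictly increasing on `[-1, ∞)`, `y` must be the principal-branch value `W_p(-R₀ e^{-R₀} e^{K₀})`.
-/

open Real Set

lemma strictMonoOn_mul_exp : StrictMonoOn (fun t : ℝ => t * exp t) (Ici (-1)) := by
  apply strictMonoOn_of_deriv_pos (convex_Ici _) (by fun_prop)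
  intro t ht
  rw [interior_Ici, mem_Ioi] at ht
  have hderiv : HasDerivAt (fun t : ℝ => t * exp t) (1 * exp t + t * exp t) t :=
    (hasDerivAt_id' t).mul (hasDerivAt_exp t)
  rw [hderiv.deriv]
  nlinarith [exp_pos t]

lemma neg_exp_neg_one_le_mul_exp (t : ℝ) : -exp (-1) ≤ t * exp t := by
  have h : -t ≤ exp (-t - 1) := by linarith [add_one_le_exp (-t - 1)]
  have h' : exp (-t - 1) * exp t = exp (-1) := by rw [← exp_add]; ring_nf
  nlinarith [exp_pos t]

lemma eq_of_mul_exp_eq {w y : ℝ} (hw : -1 ≤ w) (hy : -1 ≤ y)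
    (h : w * exp w = y * exp y) : w = y :=
  strictMonoOn_mul_exp.injOn hw hy h

lemma mul_exp_eq_of_log_div_eq {u U₀ Uc K : ℝ} (hu : 0 < u) (hU₀ : 0 < U₀)
    (h : log (u / U₀) = (u - U₀) / Uc + K) :
    -(u / Uc) * exp (-(u / Uc)) = -(U₀ / Uc) * exp (-(U₀ / Uc)) * exp K := by
  have hu_eq : u = U₀ * exp ((u - U₀) / Uc + K) := by
    rw [← h, exp_log (div_pos hu hU₀)]; field_simp
  have hexp : exp ((u - U₀) / Uc + K) * exp (-(u / Uc)) = exp (-(U₀ / Uc)) * exp K := by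
    rw [← exp_add, ← exp_add]; ring_nf
  calc -(u / Uc) * exp (-(u / Uc))
      = -(U₀ / Uc) * (exp ((u - U₀) / Uc + K) * exp (-(u / Uc))) := by
        nth_rw 1 [hu_eq]; ring
    _ = -(U₀ / Uc) * exp (-(U₀ / Uc)) * exp K := by rw [hexp]; ring

theorem final_size_lambert_general
    (β δ p c U₀ Uinf K₀ : ℝ)
    (hU0 : 0 < U₀) (hK : K₀ ≤ 0)
    (Uc : ℝ) (hUc : Uc = c * δ / (β * p))
    (W : ℝ → ℝ)
    (hW : ∀ x : ℝ, -Real.exp (-1) ≤ x → x ≤ 0 →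
      W x * Real.exp (W x) = x ∧ -1 ≤ W x ∧ W x ≤ 0)
    (hUinf : Uinf ∈ Set.Ico (0 : ℝ) Uc)
    (hrel : Real.log (Uinf / U₀) = (β * p / (c * δ)) * (Uinf - U₀) + K₀) :
    Uinf = -Uc * W (-(U₀ / Uc) * Real.exp (-(U₀ / Uc)) * Real.exp K₀) := by
  obtain ⟨hUinf_nonneg, hUinf_lt⟩ := hUinf
  have hUc_pos : 0 < Uc := hUinf_nonneg.trans_lt hUinf_lt
  have hR_pos : 0 < U₀ / Uc := div_pos hU0 hUc_pos
  have hrel' : log (Uinf / U₀) = (Uinf - U₀) / Uc + K₀ := by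
    rw [hrel, hUc, ← inv_div, inv_mul_eq_div]
  have hUinf_pos : 0 < Uinf := by
    refine hUinf_nonneg.lt_of_ne fun h => ?_
    rw [← h, zero_div, log_zero, zero_sub, neg_div] at hrel'
    linarith
  set x := -(U₀ / Uc) * exp (-(U₀ / Uc)) * exp K₀
  have hx_le : x ≤ 0 := by
    have : 0 ≤ U₀ / Uc * exp (-(U₀ / Uc)) * exp K₀ := by positivity
    linarith
  have hx_ge : -exp (-1) ≤ x := by
    have hbound := neg_exp_neg_one_le_mul_exp (-(U₀ / Uc))
    have hK' : exp K₀ ≤ 1 := exp_le_one_iff.mpr hK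
    nlinarith [exp_pos K₀, exp_pos (-(U₀ / Uc))]
  obtain ⟨hWx, hWx_ge, -⟩ := hW x hx_ge hx_le
  have hy_ge : -1 ≤ -(Uinf / Uc) := by
    linarith [(div_lt_one hUc_pos).mpr hUinf_lt]
  have hWx_eq : W x = -(Uinf / Uc) :=
    eq_of_mul_exp_eq hWx_ge hy_ge (hWx.trans (mul_exp_eq_of_log_div_eq hUinf_pos hU0 hrel').symm)
  rw [hWx_eq]
  field_simp

/-- If `U_∞ ∈ [0, U_c)` satisfies the final-size relation
`ln(U_∞/U₀) = (βp/(cδ))(U_∞ - U₀) + K₀`, then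
`U_∞ = -U_c · W_p(-R₀ e^{-R₀} e^{K₀})` where `R₀ = U₀/U_c` and `W_p` is the principal
branch of the Lambert W function (characterized on `[-1/e, 0]` by `W e^W = x` and
`-1 ≤ W ≤ 0`). -/
theorem final_size_lambert
    (β δ p c U₀ Uinf K₀ : ℝ) (hβ : 0 < β) (hδ : 0 < δ) (hp : 0 < p) (hc : 0 < c)
    (hU0 : 0 < U₀) (hK : K₀ ≤ 0)
    (Uc : ℝ) (hUc : Uc = c * δ / (β * p))
    (W : ℝ → ℝ)
    (hW : ∀ x : ℝ, -Real.exp (-1) ≤ x → x ≤ 0 →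
      W x * Real.exp (W x) = x ∧ -1 ≤ W x ∧ W x ≤ 0)
    (hUinf : Uinf ∈ Set.Ico (0 : ℝ) Uc)
    (hrel : Real.log (Uinf / U₀) = (β * p / (c * δ)) * (Uinf - U₀) + K₀) :
    Uinf = -Uc * W (-(U₀ / Uc) * Real.exp (-(U₀ / Uc)) * Real.exp K₀) :=
  final_size_lambert_general β δ p c U₀ Uinf K₀ hU0 hK Uc hUc W hW hUinf hrel
end

section
/- Let (U,I,V) solve the target-cell model with positive parameters and nonnegative components, and suppose V is twice differentiable with V'(t*) = 0 and V''(t*) > 0 at some time t* (local minimum of V) with I(t*) > 0. Then U(t*) > cδ/(βp), i.e., R(t*) := βpU(t*)/(cδ) > 1. -/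
/-!
Write `W = p I - c V` for `V'`. Where `W` vanishes, `W' = p I' - c W = p (β U V - δ I)`,
so `V'' > 0` means new infections outpace the loss of infected cells, `δ I < β U V`.
Substituting the balance `c V = p I` and cancelling `I > 0` gives `c δ < β p U`.
-/

lemma hasDerivAt_viral_rate_of_eq_zero {I V : ℝ → ℝ} {p c I' t : ℝ}
    (hI : HasDerivAt I I' t) (hV : HasDerivAt V (p * I t - c * V t) t)
    (hzero : p * I t - c * V t = 0) :
    HasDerivAt (fun s => p * I s - c * V s) (p * I') t := by
  have h := (hI.const_mul p).sub (hV.const_mul c)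
  rwa [hzero, mul_zero, sub_zero] at h

lemma div_lt_of_viral_balance {β δ p c u i v : ℝ} (hβ : 0 < β) (hp : 0 < p) (hc : 0 < c)
    (hi : 0 < i) (hbalance : p * i - c * v = 0) (hgrowth : δ * i < β * u * v) :
    c * δ / (β * p) < u := by
  have hv : c * v = p * i := by linarith
  rw [div_lt_iff₀ (mul_pos hβ hp)]
  have : c * δ * i < u * (β * p) * i :=
    calc c * δ * i = c * (δ * i) := by ring
      _ < c * (β * u * v) := mul_lt_mul_of_pos_left hgrowth hc
      _ = u * (β * p) * i := by linear_combination β * u * hv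
  exact lt_of_mul_lt_mul_right this hi.le

theorem local_min_of_V_implies_R_gt_one_general
    (β δ p c : ℝ) (hβ : 0 < β) (hp : 0 < p) (hc : 0 < c)
    (U I V : ℝ → ℝ)
    (hI : ∀ t, HasDerivAt I (β * U t * V t - δ * I t) t)
    (hV : ∀ t, HasDerivAt V (p * I t - c * V t) t)
    (tstar D : ℝ)
    (hV'' : HasDerivAt (fun t => p * I t - c * V t) D tstar)
    (hmin : p * I tstar - c * V tstar = 0) (hD : 0 < D)
    (hIpos : 0 < I tstar) :
    c * δ / (β * p) < U tstar := by
  have hD_eq : D = p * (β * U tstar * V tstar - δ * I tstar) :=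
    hV''.unique (hasDerivAt_viral_rate_of_eq_zero (hI tstar) (hV tstar) hmin)
  have hgrowth : δ * I tstar < β * U tstar * V tstar := by
    rw [hD_eq] at hD
    linarith [pos_of_mul_pos_right hD hp.le]
  exact div_lt_of_viral_balance hβ hp hc hIpos hmin hgrowth

/-- At a local minimum of `V` (`V'(t*) = 0`, `V''(t*) > 0`) with `I(t*) > 0`, the
susceptible population exceeds the critical value: `U(t*) > cδ/(βp)`. -/
theorem local_min_of_V_implies_R_gt_one
    (β δ p c : ℝ) (hβ : 0 < β) (hδ : 0 < δ) (hp : 0 < p) (hc : 0 < c)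
    (U I V : ℝ → ℝ)
    (hnonneg : ∀ t, 0 ≤ U t ∧ 0 ≤ I t ∧ 0 ≤ V t)
    (hU : ∀ t, HasDerivAt U (-β * U t * V t) t)
    (hI : ∀ t, HasDerivAt I (β * U t * V t - δ * I t) t)
    (hV : ∀ t, HasDerivAt V (p * I t - c * V t) t)
    (tstar D : ℝ)
    (hV'' : HasDerivAt (fun t => p * I t - c * V t) D tstar)
    (hmin : p * I tstar - c * V tstar = 0) (hD : 0 < D)
    (hIpos : 0 < I tstar) :
    c * δ / (β * p) < U tstar :=
  local_min_of_V_implies_R_gt_one_general β δ p c hβ hp hc U I V hI hV tstar D hV'' hmin hD hIpos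
end

section
/- Let (U,I,V) solve the target-cell model with positive parameters and nonnegative components, and suppose V'(t*) = 0 and V''(t*) < 0 at some time t* (local maximum of V) with I(t*) > 0. Then U(t*) < cδ/(βp), i.e., R(t*) < 1. -/
/-! Writing `W = pI - cV` for the rate of change of `V`, the model gives
`W' = p(βUV - δI) - cW`. At a critical point of `V` we have `W = 0`, i.e. `cV = pI`, so
`c W' = pI(βpU - cδ)`; since `pI > 0`, the sign of `V''` is the sign of `R - 1`. -/

namespace TargetCellModel

variable {β δ p c t D : ℝ} {U I V : ℝ → ℝ}

theorem hasDerivAt_viral_rate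
    (hI : HasDerivAt I (β * U t * V t - δ * I t) t) (hV : HasDerivAt V (p * I t - c * V t) t) :
    HasDerivAt (fun s => p * I s - c * V s)
      (p * (β * U t * V t - δ * I t) - c * (p * I t - c * V t)) t :=
  (hI.const_mul p).sub (hV.const_mul c)

theorem mul_deriv_viral_rate_eq_of_viral_rate_eq_zero
    (hI : HasDerivAt I (β * U t * V t - δ * I t) t) (hV : HasDerivAt V (p * I t - c * V t) t)
    (hD : HasDerivAt (fun s => p * I s - c * V s) D t) (hcrit : p * I t - c * V t = 0) :
    c * D = p * I t * (β * p * U t - c * δ) := by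
  linear_combination c * hD.unique (hasDerivAt_viral_rate hI hV) - (p * β * U t + c ^ 2) * hcrit

end TargetCellModel

theorem local_max_of_V_implies_R_lt_one_general
    (β δ p c : ℝ) (hβ : 0 < β) (hp : 0 < p) (hc : 0 < c)
    (U I V : ℝ → ℝ)
    (hI : ∀ t, HasDerivAt I (β * U t * V t - δ * I t) t)
    (hV : ∀ t, HasDerivAt V (p * I t - c * V t) t)
    (tstar D : ℝ)
    (hV'' : HasDerivAt (fun t => p * I t - c * V t) D tstar)
    (hmin : p * I tstar - c * V tstar = 0) (hD : D < 0)
    (hIpos : 0 < I tstar) :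
    U tstar < c * δ / (β * p) := by
  have hcD := TargetCellModel.mul_deriv_viral_rate_eq_of_viral_rate_eq_zero
    (hI tstar) (hV tstar) hV'' hmin
  have hsign : β * p * U tstar - c * δ < 0 :=
    neg_of_mul_neg_right (hcD ▸ mul_neg_of_pos_of_neg hc hD) (by positivity)
  rw [lt_div_iff₀ (by positivity)]
  linarith

/-- At a local maximum of `V` (`V'(t*) = 0`, `V''(t*) > 0`) with `I(t*) > 0`, the
susceptible population is below the critical value: `U(t*) < cδ/(βp)`. -/
theorem local_max_of_V_implies_R_lt_one
    (β δ p c : ℝ) (hβ : 0 < β) (hδ : 0 < δ) (hp : 0 < p) (hc : 0 < c)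
    (U I V : ℝ → ℝ)
    (hnonneg : ∀ t, 0 ≤ U t ∧ 0 ≤ I t ∧ 0 ≤ V t)
    (hU : ∀ t, HasDerivAt U (-β * U t * V t) t)
    (hI : ∀ t, HasDerivAt I (β * U t * V t - δ * I t) t)
    (hV : ∀ t, HasDerivAt V (p * I t - c * V t) t)
    (tstar D : ℝ)
    (hV'' : HasDerivAt (fun t => p * I t - c * V t) D tstar)
    (hmin : p * I tstar - c * V tstar = 0) (hD : D < 0)
    (hIpos : 0 < I tstar) :
    U tstar < c * δ / (β * p) :=
  local_max_of_V_implies_R_lt_one_general β δ p c hβ hp hc U I V hI hV tstar D hV'' hmin hD hIpos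
end

section
/- Let (U,I,V) solve the target-cell model with positive parameters, U(t₀) > 0, I(t₀) ≥ 0, V(t₀) > 0, and suppose pI(t₀)/(cV(t₀)) > 1. Then V'(t₀) > 0; moreover, if V(t) → 0 as t → ∞, V attains a positive local maximum at some time t̂ > t₀, and at that maximum U(t̂) < cδ/(βp). -/
open Filter Topology Set

/-! Since `V' = pI - cV`, the hypothesis `R_V(t₀) > 1` says exactly that `V'(t₀) > 0`, so `V`
rises above `V(t₀)` right after `t₀`; as `V → 0` it must come down again, hence it has an
interior maximum at some `t̂ > t₀`.

At `t̂` we have `pI = cV`. The integrating factor `e^{(δ+c)t}` turns the equation for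
`W = pI - cV` into `(e^{(δ+c)t} W)' = e^{(δ+c)t} V (βpU - cδ)`. If `βpU(t̂) ≥ cδ`, then, since
`U` is strictly decreasing while `U, V > 0`, the right-hand side is positive just before `t̂`;
so `W = V' < 0` there and `V` decreases into `t̂`, which is impossible at a maximum. -/

theorem HasDerivAt.eventually_nhdsGT_lt_of_pos {f : ℝ → ℝ} {f' x : ℝ}
    (hf : HasDerivAt f f' x) (hpos : 0 < f') : ∀ᶠ t in 𝓝[>] x, f x < f t := by
  have hslope : Tendsto (slope f x) (𝓝[>] x) (𝓝 f') :=
    (hasDerivWithinAt_iff_tendsto_slope' (lt_irrefl x)).mp hf.hasDerivWithinAt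
  filter_upwards [hslope.eventually (lt_mem_nhds hpos), self_mem_nhdsWithin] with t ht hxt
  rw [slope_def_field, div_pos_iff_of_pos_right (sub_pos.mpr hxt)] at ht
  exact sub_pos.mp ht

theorem eventually_nhdsLT_lt_of_hasDerivAt_pos {f f' : ℝ → ℝ} {x : ℝ}
    (hf : ∀ t, HasDerivAt f (f' t) t) (hpos : ∀ᶠ t in 𝓝[<] x, 0 < f' t) :
    ∀ᶠ t in 𝓝[<] x, f t < f x := by
  obtain ⟨a, hax, hsub⟩ := mem_nhdsLT_iff_exists_Ioo_subset.mp hpos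
  have hmono : StrictMonoOn f (Icc a x) :=
    strictMonoOn_of_hasDerivWithinAt_pos (convex_Icc a x)
      (fun t _ => (hf t).continuousAt.continuousWithinAt)
      (fun t _ => (hf t).hasDerivWithinAt) (by rw [interior_Icc]; exact hsub)
  filter_upwards [Ioo_mem_nhdsLT hax] with t ht
  exact hmono (Ioo_subset_Icc_self ht) (right_mem_Icc.mpr (le_of_lt hax)) ht.2

theorem exists_isLocalMax_of_tendsto_atTop {f : ℝ → ℝ} {a b l : ℝ} (hf : Continuous f)
    (hab : a < b) (hfab : f a < f b) (hl : Tendsto f atTop (𝓝 l)) (hlb : l < f b) :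
    ∃ c, a < c ∧ IsLocalMax f c ∧ f b ≤ f c := by
  obtain ⟨T, hfT, hbT⟩ := ((hl.eventually (gt_mem_nhds hlb)).and (eventually_gt_atTop b)).exists
  obtain ⟨c, ⟨hac, hcT⟩, hmax⟩ :=
    isCompact_Icc.exists_isMaxOn (nonempty_Icc.mpr (hab.trans hbT).le) hf.continuousOn
  have hbc : f b ≤ f c := hmax ⟨hab.le, hbT.le⟩
  have hac_lt : a < c := lt_of_le_of_ne hac (by rintro rfl; linarith)
  have hcT_lt : c < T := lt_of_le_of_ne hcT (by rintro rfl; linarith)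
  exact ⟨c, hac_lt, hmax.isLocalMax (Icc_mem_nhds hac_lt hcT_lt), hbc⟩

namespace TargetCell

theorem hasDerivAt_exp_mul_netProduction {β δ p c : ℝ} {U I V : ℝ → ℝ}
    (hI : ∀ t, HasDerivAt I (β * U t * V t - δ * I t) t)
    (hV : ∀ t, HasDerivAt V (p * I t - c * V t) t) (t : ℝ) :
    HasDerivAt (fun s => Real.exp ((δ + c) * s) * (p * I s - c * V s))
      (Real.exp ((δ + c) * t) * (V t * (β * p * U t - c * δ))) t := by
  have hexp : HasDerivAt (fun s => Real.exp ((δ + c) * s))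
      (Real.exp ((δ + c) * t) * (δ + c)) t := by
    simpa using ((hasDerivAt_id t).const_mul (δ + c)).exp
  exact (hexp.mul (((hI t).const_mul p).sub ((hV t).const_mul c))).congr_deriv
    (by simp only [Pi.sub_apply]; ring)

theorem target_lt_of_isLocalMax_virus {β δ p c : ℝ} (hβ : 0 < β) (hδ : 0 < δ) (hp : 0 < p)
    (hc : 0 < c) {U I V : ℝ → ℝ}
    (hU : ∀ t, HasDerivAt U (-β * U t * V t) t)
    (hI : ∀ t, HasDerivAt I (β * U t * V t - δ * I t) t)
    (hV : ∀ t, HasDerivAt V (p * I t - c * V t) t)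
    {s : ℝ} (hmax : IsLocalMax V s) (hVs : 0 < V s) : U s < c * δ / (β * p) := by
  by_contra! hge
  have hβp : 0 < β * p := mul_pos hβ hp
  have hUs : 0 < U s := (by positivity : 0 < c * δ / (β * p)).trans_le hge
  have hthreshold : c * δ ≤ β * p * U s := by rwa [div_le_iff₀' hβp] at hge
  have hUV : ∀ᶠ t in 𝓝[<] s, 0 < U t ∧ 0 < V t := nhdsWithin_le_nhds <|
    ((hU s).continuousAt.eventually (lt_mem_nhds hUs)).and
      ((hV s).continuousAt.eventually (lt_mem_nhds hVs))
  have hUdec : ∀ᶠ t in 𝓝[<] s, U s < U t := by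
    have := eventually_nhdsLT_lt_of_hasDerivAt_pos (f := -U) (f' := fun t => β * U t * V t)
      (fun t => by simpa using (hU t).neg) (hUV.mono fun t ⟨hUt, hVt⟩ => by positivity)
    simpa using this
  have hnet : ∀ᶠ t in 𝓝[<] s, p * I t - c * V t < 0 := by
    have := eventually_nhdsLT_lt_of_hasDerivAt_pos (hasDerivAt_exp_mul_netProduction hI hV) <|
      (hUV.and hUdec).mono fun t ⟨⟨_, hVt⟩, hUt⟩ => by
        have : 0 < β * p * U t - c * δ := by nlinarith
        positivity
    filter_upwards [this] with t ht
    rw [hmax.hasDerivAt_eq_zero (hV s), mul_zero] at ht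
    exact neg_of_mul_neg_right ht (Real.exp_pos _).le
  have hVdec : ∀ᶠ t in 𝓝[<] s, V s < V t := by
    have := eventually_nhdsLT_lt_of_hasDerivAt_pos (f := -V) (f' := fun t => -(p * I t - c * V t))
      (fun t => (hV t).neg) (hnet.mono fun t ht => neg_pos.mpr ht)
    simpa using this
  obtain ⟨t, hlt, hle⟩ := (hVdec.and (nhdsWithin_le_nhds hmax)).exists
  exact (hlt.trans_le hle).false

end TargetCell

theorem virus_spreads_when_RV_gt_one_general
    (β δ p c : ℝ) (hβ : 0 < β) (hδ : 0 < δ) (hp : 0 < p) (hc : 0 < c)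
    (U I V : ℝ → ℝ)
    (hU : ∀ t, HasDerivAt U (-β * U t * V t) t)
    (hI : ∀ t, HasDerivAt I (β * U t * V t - δ * I t) t)
    (hV : ∀ t, HasDerivAt V (p * I t - c * V t) t)
    (t₀ : ℝ) (hV0 : 0 < V t₀)
    (hRV : 1 < p * I t₀ / (c * V t₀)) :
    0 < p * I t₀ - c * V t₀ ∧
    (Tendsto V atTop (nhds 0) →
      ∃ that : ℝ, t₀ < that ∧ IsLocalMax V that ∧ 0 < V that ∧
        U that < c * δ / (β * p)) := by
  have hV'0 : 0 < p * I t₀ - c * V t₀ :=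
    sub_pos.mpr ((one_lt_div (mul_pos hc hV0)).mp hRV)
  refine ⟨hV'0, fun hlim => ?_⟩
  obtain ⟨t₁, hV₁, ht₁⟩ :=
    (((hV t₀).eventually_nhdsGT_lt_of_pos hV'0).and self_mem_nhdsWithin).exists
  have hVcont : Continuous V := continuous_iff_continuousAt.mpr fun t => (hV t).continuousAt
  obtain ⟨that, hlt, hmax, hle⟩ :=
    exists_isLocalMax_of_tendsto_atTop hVcont ht₁ hV₁ hlim (hV0.trans hV₁)
  have hVpos : 0 < V that := hV0.trans (hV₁.trans_le hle)
  exact ⟨that, hlt, hmax, hVpos,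
    TargetCell.target_lt_of_isLocalMax_virus hβ hδ hp hc hU hI hV hmax hVpos⟩

/-- If `R_V(t₀) = pI(t₀)/(cV(t₀)) > 1` then `V'(t₀) > 0`; and if moreover `V(t) → 0` as
`t → ∞`, then `V` attains a positive local maximum at some `t̂ > t₀`, at which
`U(t̂) < cδ/(βp)`. -/
theorem virus_spreads_when_RV_gt_one
    (β δ p c : ℝ) (hβ : 0 < β) (hδ : 0 < δ) (hp : 0 < p) (hc : 0 < c)
    (U I V : ℝ → ℝ)
    (hU : ∀ t, HasDerivAt U (-β * U t * V t) t)
    (hI : ∀ t, HasDerivAt I (β * U t * V t - δ * I t) t)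
    (hV : ∀ t, HasDerivAt V (p * I t - c * V t) t)
    (t₀ : ℝ) (hU0 : 0 < U t₀) (hI0 : 0 ≤ I t₀) (hV0 : 0 < V t₀)
    (hRV : 1 < p * I t₀ / (c * V t₀)) :
    0 < p * I t₀ - c * V t₀ ∧
    (Tendsto V atTop (nhds 0) →
      ∃ that : ℝ, t₀ < that ∧ IsLocalMax V that ∧ 0 < V that ∧
        U that < c * δ / (β * p)) :=
  virus_spreads_when_RV_gt_one_general β δ p c hβ hδ hp hc U I V hU hI hV t₀ hV0 hRV
end
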